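/- (Spectral Theorem) Let (θ, Φ) be an ergodic linear random dynamical system on ℝ^d with dichotomy spectrum Σ ⊆ [−∞, +∞]. Then there exist n ∈ {1, …, d} and extended reals −∞ ≤ a₁ ≤ b₁ < a₂ ≤ b₂ < … < a_n ≤ b_n ≤ +∞ such that Σ = [a₁, b₁] ∪ [a₂, b₂] ∪ … ∪ [a_n, b_n], where intervals with infinite endpoints are understood in [−∞, +∞]: [−∞, a] = {−∞} ∪ (−∞, a], [a, +∞] = [a, ∞) ∪ {+∞}, [−∞, −∞] = {−∞}, [+∞, +∞] = {+∞}, and [−∞, +∞] is the whole extended real line. -/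

import Mathlib

open MeasureTheory Filter

noncomputable section

/-- A linear random dynamical system `(θ, Φ)` on `ℝ^d` over the probability space `(Ω, 𝓕, ℙ)`:
`θ` is a measure-preserving measurable dynamical system on `Ω`, and `Φ` is a measurable
cocycle over `θ` taking values in the invertible continuous linear maps of `ℝ^d`. -/
structure LinRDS {Ω : Type*} [MeasurableSpace Ω] (ℙ : Measure Ω) (d : ℕ) where
  θ : ℝ → Ω → Ω
  Φ : ℝ → Ω → EuclideanSpace ℝ (Fin d) →L[ℝ] EuclideanSpace ℝ (Fin d)
  θ_meas : Measurable fun p : ℝ × Ω => θ p.1 p.2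
  θ_zero : ∀ ω, θ 0 ω = ω
  θ_add : ∀ t s ω, θ (t + s) ω = θ t (θ s ω)
  θ_pres : ∀ t, MeasurePreserving (θ t) ℙ ℙ
  Φ_meas : ∀ x, Measurable fun p : ℝ × Ω => Φ p.1 p.2 x
  Φ_zero : ∀ ω, Φ 0 ω = 1
  Φ_cocycle : ∀ t s ω, Φ (t + s) ω = Φ t (θ s ω) * Φ s ω
  Φ_isUnit : ∀ t ω, IsUnit (Φ t ω)

variable {Ω : Type*} [MeasurableSpace Ω] {ℙ : Measure Ω} {d : ℕ}

/-- The base of the linear random dynamical system is ergodic. -/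
def LinRDS.IsErgodic (S : LinRDS ℙ d) : Prop :=
  ∀ A : Set Ω, MeasurableSet A → (∀ t, S.θ t ⁻¹' A = A) → ℙ A = 0 ∨ ℙ A = 1

/-- An invariant projector of a linear random dynamical system. -/
def LinRDS.InvProjector (S : LinRDS ℙ d)
    (P : Ω → EuclideanSpace ℝ (Fin d) →L[ℝ] EuclideanSpace ℝ (Fin d)) : Prop :=
  (∀ x, Measurable fun ω => P ω x) ∧ (∀ ω, P ω * P ω = P ω) ∧
    ∀ t ω, P (S.θ t ω) * S.Φ t ω = S.Φ t ω * P ω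

/-- `(θ, Φ)` admits an exponential dichotomy with growth rate `γ` and invariant projector `P`. -/
def LinRDS.IsED (S : LinRDS ℙ d) (γ : ℝ)
    (P : Ω → EuclideanSpace ℝ (Fin d) →L[ℝ] EuclideanSpace ℝ (Fin d)) : Prop :=
  S.InvProjector P ∧ ∃ a > (0:ℝ), ∃ K ≥ (1:ℝ), ∀ᵐ ω ∂ℙ,
    (∀ t : ℝ, 0 ≤ t → ‖S.Φ t ω * P ω‖ ≤ K * Real.exp ((γ - a) * t)) ∧
    (∀ t : ℝ, t ≤ 0 → ‖S.Φ t ω * (1 - P ω)‖ ≤ K * Real.exp ((γ + a) * t))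

/-- `(θ, Φ)` admits an exponential dichotomy with real growth rate `γ`. -/
def LinRDS.AdmitsED (S : LinRDS ℙ d) (γ : ℝ) : Prop :=
  ∃ P, S.IsED γ P

/-- `(θ, Φ)` admits an exponential dichotomy with extended-real growth rate `γ`; for
`γ = ±∞` this means an exponential dichotomy with some real growth rate whose projector
is a.s. the identity (resp. a.s. zero). -/
def LinRDS.AdmitsEDE (S : LinRDS ℙ d) (γ : EReal) : Prop :=
  (∃ g : ℝ, γ = (g : EReal) ∧ S.AdmitsED g) ∨
  (γ = ⊤ ∧ ∃ g : ℝ, ∃ P, S.IsED g P ∧ ∀ᵐ ω ∂ℙ, P ω = 1) ∨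
  (γ = ⊥ ∧ ∃ g : ℝ, ∃ P, S.IsED g P ∧ ∀ᵐ ω ∂ℙ, P ω = 0)

/-- The dichotomy spectrum of `(θ, Φ)`, a subset of the extended real line. -/
def LinRDS.spectrum (S : LinRDS ℙ d) : Set EReal :=
  {γ | ¬ S.AdmitsEDE γ}

/-- The rank of a continuous linear map on `ℝ^d`. -/
def clmRank (P : EuclideanSpace ℝ (Fin d) →L[ℝ] EuclideanSpace ℝ (Fin d)) : ℕ :=
  Module.finrank ℝ (LinearMap.range
    (P : EuclideanSpace ℝ (Fin d) →ₗ[ℝ] EuclideanSpace ℝ (Fin d)))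

/-!
Off the spectrum, the projector of an exponential dichotomy with real growth rate `γ` is
a.e. unique, and by ergodicity its rank is a.e. a constant `r γ ≤ d`. Comparing dichotomies
with rates `γ₁ ≤ γ₂` shows that the range of the first projector lies in the range of the
second, so `r` is monotone, and that dichotomies of equal rank have a.e. equal projectors,
which then give a dichotomy at every rate in between. The resolvent is open with `r` locally
constant, rank `0` propagates to smaller rates and rank `d` to larger ones, and `-∞`, `+∞` lie
in the resolvent exactly when the ranks `0`, `d` occur. Hence for every `k < d` the gap between
the resolvent rates of rank `≤ k` and those of rank `> k` is a closed interval of the extended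
line, the spectrum is the union of these `d` intervals, and any two of them either coincide or
are strictly separated.
-/

open Set Topology

lemma exists_separating_nat {A B : Set ℕ} {d : ℕ} (hd : 0 < d) (hB : ∀ b ∈ B, b < d)
    (hA : ∀ a ∈ A, 0 < a ∧ a ≤ d) (hBA : ∀ b ∈ B, ∀ a ∈ A, b < a) :
    ∃ k < d, (∀ b ∈ B, b ≤ k) ∧ ∀ a ∈ A, k < a := by
  by_cases hA' : A.Nonempty
  · have hmem := Nat.sInf_mem hA'
    have := hA _ hmem
    refine ⟨sInf A - 1, by omega, fun b hb => ?_, fun a ha => ?_⟩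
    · have := hBA b hb _ hmem
      omega
    · have := Nat.sInf_le ha
      omega
  · refine ⟨d - 1, by omega, fun b hb => ?_, fun a ha => (hA' ⟨a, ha⟩).elim⟩
    have := hB b hb
    omega

lemma exists_ordered_Icc_eq_iUnion {α ι : Type*} [LinearOrder α] [LinearOrder ι] [Fintype ι]
    [Nonempty ι] (l u : ι → α) (hlu : ∀ i, l i ≤ u i)
    (hsep : ∀ i j, i ≤ j → (l i = l j ∧ u i = u j) ∨ u i < l j) :
    ∃ n, 1 ≤ n ∧ n ≤ Fintype.card ι ∧ ∃ a b : Fin n → α, (∀ m, a m ≤ b m) ∧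
      (∀ m m', m < m' → b m < a m') ∧ ⋃ i, Icc (l i) (u i) = ⋃ m, Icc (a m) (b m) := by
  classical
  set p : ι → α ×ₗ α := fun i => toLex (l i, u i)
  set T := Finset.univ.image p
  set e := T.orderIsoOfFin rfl
  have he : ∀ m, ∃ i, p i = e m := fun m => by simpa [T] using Finset.mem_image.1 (e m).2
  refine ⟨T.card, Finset.card_pos.2 (Finset.univ_nonempty.image _),
    Finset.card_image_le.trans (by simp), fun m => (ofLex (e m : α ×ₗ α)).1,
    fun m => (ofLex (e m : α ×ₗ α)).2, fun m => ?_, fun m m' hm => ?_, ?_⟩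
  · obtain ⟨i, hi⟩ := he m
    simpa [← hi, p] using hlu i
  · obtain ⟨i, hi⟩ := he m
    obtain ⟨j, hj⟩ := he m'
    have hlt : p i < p j := by rw [hi, hj]; exact e.strictMono hm
    simp only [← hi, ← hj, p, ofLex_toLex]
    rcases le_total i j with hij | hji
    · rcases hsep i j hij with ⟨h1, h2⟩ | h
      · simp [p, h1, h2] at hlt
      · exact h
    · rcases hsep j i hji with ⟨h1, h2⟩ | h
      · simp [p, h1, h2] at hlt
      · exact absurd hlt (Prod.Lex.toLex_lt_toLex.2 (Or.inl ((hlu j).trans_lt h))).not_gt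
  · ext x
    simp only [mem_iUnion]
    constructor
    · rintro ⟨i, hx⟩
      refine ⟨e.symm ⟨p i, Finset.mem_image_of_mem _ (Finset.mem_univ _)⟩, ?_⟩
      simpa [p] using hx
    · rintro ⟨m, hx⟩
      obtain ⟨i, hi⟩ := he m
      exact ⟨i, by simpa [← hi, p] using hx⟩

structure IsRankedResolvent (ρ : Set ℝ) (r : ℝ → ℕ) (d : ℕ) : Prop where
  rank_le : ∀ γ ∈ ρ, r γ ≤ d
  rank_mono : ∀ γ₁ ∈ ρ, ∀ γ₂ ∈ ρ, γ₁ ≤ γ₂ → r γ₁ ≤ r γ₂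
  Icc_subset : ∀ γ₁ ∈ ρ, ∀ γ₂ ∈ ρ, r γ₁ = r γ₂ → Icc γ₁ γ₂ ⊆ ρ
  eventually_mem_rank_eq : ∀ γ ∈ ρ, ∀ᶠ γ' in 𝓝 γ, γ' ∈ ρ ∧ r γ' = r γ
  mem_of_le_of_rank_eq_zero : ∀ γ ∈ ρ, r γ = 0 → ∀ γ' ≤ γ, γ' ∈ ρ
  mem_of_ge_of_rank_eq : ∀ γ ∈ ρ, r γ = d → ∀ γ', γ ≤ γ' → γ' ∈ ρ

def gapLower (ρ : Set ℝ) (r : ℝ → ℕ) (k : ℕ) : EReal :=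
  sSup ((↑) '' {γ ∈ ρ | r γ ≤ k})

def gapUpper (ρ : Set ℝ) (r : ℝ → ℕ) (k : ℕ) : EReal :=
  sInf ((↑) '' {γ ∈ ρ | k < r γ})

lemma mem_Icc_gap_iff {ρ : Set ℝ} {r : ℝ → ℕ} {k : ℕ} {x : EReal} :
    x ∈ Icc (gapLower ρ r k) (gapUpper ρ r k) ↔
      (∀ γ ∈ ρ, r γ ≤ k → (γ : EReal) ≤ x) ∧ ∀ γ ∈ ρ, k < r γ → x ≤ γ := by
  simp only [mem_Icc, gapLower, gapUpper, sSup_le_iff, le_sInf_iff, forall_mem_image,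
    mem_ofPred_eq, and_imp]

namespace IsRankedResolvent

variable {ρ : Set ℝ} {r : ℝ → ℕ} {d : ℕ} (h : IsRankedResolvent ρ r d)
include h

lemma gapLower_le_gapUpper (k : ℕ) : gapLower ρ r k ≤ gapUpper ρ r k := by
  refine sSup_le (forall_mem_image.2 fun γ₁ hγ₁ => le_sInf (forall_mem_image.2 fun γ₂ hγ₂ => ?_))
  by_contra! hlt
  have := h.rank_mono γ₂ hγ₂.1 γ₁ hγ₁.1 (EReal.coe_lt_coe_iff.1 hlt).le
  have := hγ₁.2
  have := hγ₂.2
  omega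

lemma exists_gt_rank_eq {γ : ℝ} (hγ : γ ∈ ρ) : ∃ γ' ∈ ρ, γ < γ' ∧ r γ' = r γ := by
  obtain ⟨γ', hlt, hγ', hr⟩ := (h.eventually_mem_rank_eq γ hγ).exists_gt
  exact ⟨γ', hγ', hlt, hr⟩

lemma exists_lt_rank_eq {γ : ℝ} (hγ : γ ∈ ρ) : ∃ γ' ∈ ρ, γ' < γ ∧ r γ' = r γ := by
  obtain ⟨γ', hlt, hγ', hr⟩ := (h.eventually_mem_rank_eq γ hγ).exists_lt
  exact ⟨γ', hγ', hlt, hr⟩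

lemma gap_eq_or_gapUpper_lt_gapLower {k k' : ℕ} (hk : k ≤ k') :
    (gapLower ρ r k = gapLower ρ r k' ∧ gapUpper ρ r k = gapUpper ρ r k') ∨
      gapUpper ρ r k < gapLower ρ r k' := by
  by_cases hex : ∃ γ ∈ ρ, k < r γ ∧ r γ ≤ k'
  · obtain ⟨γ, hγ, hkγ, hγk'⟩ := hex
    obtain ⟨γ₁, hγ₁, hlt₁, hr₁⟩ := h.exists_lt_rank_eq hγ
    obtain ⟨γ₂, hγ₂, hlt₂, hr₂⟩ := h.exists_gt_rank_eq hγ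
    right
    calc gapUpper ρ r k ≤ γ₁ := sInf_le ⟨γ₁, ⟨hγ₁, hr₁ ▸ hkγ⟩, rfl⟩
      _ < γ₂ := EReal.coe_lt_coe_iff.2 (hlt₁.trans hlt₂)
      _ ≤ gapLower ρ r k' := le_sSup ⟨γ₂, ⟨hγ₂, hr₂ ▸ hγk'⟩, rfl⟩
  · push Not at hex
    have hlow : {γ ∈ ρ | r γ ≤ k} = {γ ∈ ρ | r γ ≤ k'} := by
      ext γ
      refine ⟨fun ⟨hγ, hr⟩ => ⟨hγ, hr.trans hk⟩, fun ⟨hγ, hr⟩ => ⟨hγ, ?_⟩⟩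
      by_contra! hkr
      exact (hex γ hγ hkr).not_ge hr
    have hup : {γ ∈ ρ | k < r γ} = {γ ∈ ρ | k' < r γ} := by
      ext γ
      exact ⟨fun ⟨hγ, hr⟩ => ⟨hγ, hex γ hγ hr⟩, fun ⟨hγ, hr⟩ => ⟨hγ, hk.trans_lt hr⟩⟩
    left
    simp only [gapLower, gapUpper, hlow, hup, and_self]

variable {sp : Set EReal} (hreal : ∀ g : ℝ, (g : EReal) ∈ sp ↔ g ∉ ρ)
  (hbot : ⊥ ∈ sp ↔ ∀ γ ∈ ρ, r γ ≠ 0) (htop : ⊤ ∈ sp ↔ ∀ γ ∈ ρ, r γ ≠ d)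
include hreal hbot htop

lemma mem_of_mem_Icc_gap {k : ℕ} (hk : k < d) {x : EReal}
    (hx : x ∈ Icc (gapLower ρ r k) (gapUpper ρ r k)) : x ∈ sp := by
  rw [mem_Icc_gap_iff] at hx
  induction x using EReal.rec with
  | bot =>
    exact hbot.2 fun γ hγ hr => EReal.coe_ne_bot γ (le_bot_iff.1 (hx.1 γ hγ (by omega)))
  | top =>
    exact htop.2 fun γ hγ hr => EReal.coe_ne_top γ (top_le_iff.1 (hx.2 γ hγ (by omega)))
  | coe g =>
    refine (hreal g).2 fun hg => ?_
    rcases le_or_gt (r g) k with hgk | hgk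
    · obtain ⟨γ, hγ, hlt, hr⟩ := h.exists_gt_rank_eq hg
      exact hlt.not_ge (EReal.coe_le_coe_iff.1 (hx.1 γ hγ (hr ▸ hgk)))
    · obtain ⟨γ, hγ, hlt, hr⟩ := h.exists_lt_rank_eq hg
      exact hlt.not_ge (EReal.coe_le_coe_iff.1 (hx.2 γ hγ (hr ▸ hgk)))

lemma exists_mem_Icc_gap (hd : 0 < d) {x : EReal} (hx : x ∈ sp) :
    ∃ k < d, x ∈ Icc (gapLower ρ r k) (gapUpper ρ r k) := by
  have hBA : ∀ γ₁ ∈ ρ, (γ₁ : EReal) < x → ∀ γ₂ ∈ ρ, x < γ₂ → r γ₁ < r γ₂ := by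
    intro γ₁ hγ₁ h₁ γ₂ hγ₂ h₂
    induction x using EReal.rec with
    | bot => exact absurd h₁ not_lt_bot
    | top => exact absurd h₂ not_top_lt
    | coe g =>
      rw [EReal.coe_lt_coe_iff] at h₁ h₂
      refine (h.rank_mono γ₁ hγ₁ γ₂ hγ₂ (h₁.trans h₂).le).lt_of_ne fun heq => ?_
      exact (hreal g).1 hx (h.Icc_subset γ₁ hγ₁ γ₂ hγ₂ heq ⟨h₁.le, h₂.le⟩)
  have hA : ∀ γ ∈ ρ, x < γ → 0 < r γ ∧ r γ ≤ d := by
    refine fun γ hγ hlt => ⟨Nat.pos_of_ne_zero fun h0 => ?_, h.rank_le γ hγ⟩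
    induction x using EReal.rec with
    | bot => exact hbot.1 hx γ hγ h0
    | top => exact absurd hlt not_top_lt
    | coe g =>
      exact (hreal g).1 hx
        (h.mem_of_le_of_rank_eq_zero γ hγ h0 g (EReal.coe_lt_coe_iff.1 hlt).le)
  have hB : ∀ γ ∈ ρ, (γ : EReal) < x → r γ < d := by
    refine fun γ hγ hlt => (h.rank_le γ hγ).lt_of_ne fun hd => ?_
    induction x using EReal.rec with
    | bot => exact absurd hlt not_lt_bot
    | top => exact htop.1 hx γ hγ hd
    | coe g =>
      exact (hreal g).1 hx (h.mem_of_ge_of_rank_eq γ hγ hd g (EReal.coe_lt_coe_iff.1 hlt).le)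
  obtain ⟨k, hkd, hBk, hkA⟩ := exists_separating_nat hd (A := r '' {γ ∈ ρ | x < γ})
    (B := r '' {γ ∈ ρ | (γ : EReal) < x}) (forall_mem_image.2 fun γ hγ => hB γ hγ.1 hγ.2)
    (forall_mem_image.2 fun γ hγ => hA γ hγ.1 hγ.2)
    (forall_mem_image.2 fun γ₁ hγ₁ => forall_mem_image.2 fun γ₂ hγ₂ =>
      hBA γ₁ hγ₁.1 hγ₁.2 γ₂ hγ₂.1 hγ₂.2)
  refine ⟨k, hkd, mem_Icc_gap_iff.2 ⟨fun γ hγ hr => ?_, fun γ hγ hr => ?_⟩⟩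
  · by_contra! hlt
    exact (hkA _ ⟨γ, ⟨hγ, hlt⟩, rfl⟩).not_ge hr
  · by_contra! hlt
    exact (hBk _ ⟨γ, ⟨hγ, hlt⟩, rfl⟩).not_gt hr

lemma eq_iUnion_Icc_gap (hd : 0 < d) :
    sp = ⋃ k : Fin d, Icc (gapLower ρ r k) (gapUpper ρ r k) := by
  ext x
  simp only [mem_iUnion]
  refine ⟨fun hx => ?_, fun ⟨k, hx⟩ => h.mem_of_mem_Icc_gap hreal hbot htop k.2 hx⟩
  obtain ⟨k, hkd, hx⟩ := h.exists_mem_Icc_gap hreal hbot htop hd hx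
  exact ⟨⟨k, hkd⟩, hx⟩

theorem exists_Icc_decomposition (hd : 0 < d) :
    ∃ n : ℕ, 1 ≤ n ∧ n ≤ d ∧ ∃ a b : Fin n → EReal, (∀ i, a i ≤ b i) ∧
      (∀ i j, i < j → b i < a j) ∧ sp = ⋃ i, Icc (a i) (b i) := by
  have : Nonempty (Fin d) := ⟨⟨0, hd⟩⟩
  obtain ⟨n, hn, hnd, a, b, hab, hba, hU⟩ := exists_ordered_Icc_eq_iUnion _ _
    (fun k : Fin d => h.gapLower_le_gapUpper k) fun k k' hk => h.gap_eq_or_gapUpper_lt_gapLower hk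
  exact ⟨n, hn, by simpa using hnd, a, b, hab, hba,
    (h.eq_iUnion_Icc_gap hreal hbot htop hd).trans hU⟩

end IsRankedResolvent

local notation "E" => EuclideanSpace ℝ (Fin d)

lemma clmRank_le (p : E →L[ℝ] E) : clmRank p ≤ d := by
  simpa [clmRank] using Submodule.finrank_le (LinearMap.range (p : E →ₗ[ℝ] E))

@[simp] lemma clmRank_zero : clmRank (0 : E →L[ℝ] E) = 0 := by
  simp [clmRank]

@[simp] lemma clmRank_one : clmRank (1 : E →L[ℝ] E) = d := by
  rw [clmRank, ContinuousLinearMap.toLinearMap_one, LinearMap.range_eq_top.2 fun x => ⟨x, rfl⟩]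
  simp

lemma range_le_range_of_mul_eq {p q : E →L[ℝ] E} (h : q * p = p) :
    LinearMap.range (p : E →ₗ[ℝ] E) ≤ LinearMap.range (q : E →ₗ[ℝ] E) := by
  rw [← h]
  exact LinearMap.range_comp_le_range (p : E →ₗ[ℝ] E) (q : E →ₗ[ℝ] E)

lemma clmRank_le_of_mul_eq {p q : E →L[ℝ] E} (h : q * p = p) : clmRank p ≤ clmRank q :=
  Submodule.finrank_mono (range_le_range_of_mul_eq h)

lemma eq_of_mul_eq_of_clmRank_eq {p q : E →L[ℝ] E} (hp : IsIdempotentElem p) (hqp : q * p = p)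
    (hpq : p * q = p) (hr : clmRank p = clmRank q) : p = q := by
  have hrange := Submodule.eq_of_le_of_finrank_eq (range_le_range_of_mul_eq hqp) hr
  ext1 x
  have hqx : q x ∈ LinearMap.range (p : E →ₗ[ℝ] E) := hrange ▸ LinearMap.mem_range_self _ x
  have hpqx : p (q x) = q x :=
    (LinearMap.IsIdempotentElem.mem_range_iff
      (ContinuousLinearMap.IsIdempotentElem.toLinearMap hp)).1 hqx
  rw [← hpqx, ← mul_apply_eq_comp, hpq]

lemma eq_zero_of_clmRank_eq_zero {p : E →L[ℝ] E} (hr : clmRank p = 0) : p = 0 :=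
  ContinuousLinearMap.coe_injective (LinearMap.range_eq_bot.1 (Submodule.finrank_eq_zero.1 hr))

lemma eq_one_of_clmRank_eq {p : E →L[ℝ] E} (hp : IsIdempotentElem p) (hr : clmRank p = d) :
    p = 1 :=
  eq_of_mul_eq_of_clmRank_eq hp (one_mul p) (mul_one p) (by rw [hr, clmRank_one])

lemma trace_eq_clmRank {p : E →L[ℝ] E} (hp : IsIdempotentElem p) :
    LinearMap.trace ℝ E (p : E →ₗ[ℝ] E) = clmRank p :=
  (LinearMap.IsIdempotentElem.isProj_range _
    (ContinuousLinearMap.IsIdempotentElem.toLinearMap hp)).trace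

lemma eq_zero_of_norm_le_mul_exp {F : Type*} [NormedAddCommGroup F] {x : F} {C c : ℝ}
    (hc : c < 0) (h : ∀ n : ℕ, ‖x‖ ≤ C * Real.exp (c * n)) : x = 0 := by
  have hlim : Tendsto (fun n : ℕ => C * Real.exp (c * n)) atTop (𝓝 0) := by
    simpa using (Real.tendsto_exp_atBot.comp
      (tendsto_natCast_atTop_atTop.const_mul_atTop_of_neg hc)).const_mul C
  exact norm_le_zero_iff.1 (ge_of_tendsto' hlim h)

lemma norm_mul_le_mul_exp {R : Type*} [NormedRing R] {A B : R} {K K' a b : ℝ}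
    (hA : ‖A‖ ≤ K * Real.exp a) (hB : ‖B‖ ≤ K' * Real.exp b) :
    ‖A * B‖ ≤ K * K' * Real.exp (a + b) := by
  calc ‖A * B‖ ≤ ‖A‖ * ‖B‖ := norm_mul_le A B
    _ ≤ K * Real.exp a * (K' * Real.exp b) :=
      mul_le_mul hA hB (norm_nonneg B) ((norm_nonneg A).trans hA)
    _ = K * K' * Real.exp (a + b) := by rw [Real.exp_add]; ring

namespace LinRDS

variable (S : LinRDS ℙ d)

lemma θ_neg_θ (t : ℝ) (ω : Ω) : S.θ (-t) (S.θ t ω) = ω := by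
  rw [← S.θ_add, neg_add_cancel, S.θ_zero]

lemma Φ_neg_mul_Φ (t : ℝ) (ω : Ω) : S.Φ (-t) (S.θ t ω) * S.Φ t ω = 1 := by
  rw [← S.Φ_cocycle, neg_add_cancel, S.Φ_zero]

lemma Φ_mul_Φ_neg (t : ℝ) (ω : Ω) : S.Φ t ω * S.Φ (-t) (S.θ t ω) = 1 := by
  simpa [S.θ_neg_θ] using S.Φ_neg_mul_Φ (-t) (S.θ t ω)

lemma ae_forall_int_θ {p : Ω → Prop} (h : ∀ᵐ ω ∂ℙ, p ω) : ∀ᵐ ω ∂ℙ, ∀ n : ℤ, p (S.θ n ω) :=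
  ae_all_iff.2 fun n => (S.θ_pres n).quasiMeasurePreserving.ae h

variable {S} {P Q : Ω → EuclideanSpace ℝ (Fin d) →L[ℝ] EuclideanSpace ℝ (Fin d)}
  {γ γ₁ γ₂ γ' : ℝ}

namespace InvProjector

variable (hP : S.InvProjector P)
include hP

lemma Φ_conj (t : ℝ) (ω : Ω) : S.Φ (-t) (S.θ t ω) * P (S.θ t ω) * S.Φ t ω = P ω := by
  rw [mul_assoc, hP.2.2, ← mul_assoc, S.Φ_neg_mul_Φ, one_mul]

lemma Φ_conj_one_sub (t : ℝ) (ω : Ω) :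
    S.Φ (-t) (S.θ t ω) * (1 - P (S.θ t ω)) * S.Φ t ω = 1 - P ω := by
  rw [mul_sub, sub_mul, mul_one, hP.Φ_conj, S.Φ_neg_mul_Φ]

lemma trace_θ (t : ℝ) (ω : Ω) :
    LinearMap.trace ℝ E (P (S.θ t ω) : E →ₗ[ℝ] E) = LinearMap.trace ℝ E (P ω : E →ₗ[ℝ] E) := by
  conv_rhs => rw [← hP.Φ_conj t ω, mul_assoc, ContinuousLinearMap.toLinearMap_mul,
    LinearMap.trace_mul_comm, ← ContinuousLinearMap.toLinearMap_mul, mul_assoc, S.Φ_mul_Φ_neg,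
    mul_one]

lemma clmRank_θ (t : ℝ) (ω : Ω) : clmRank (P (S.θ t ω)) = clmRank (P ω) := by
  have := hP.trace_θ t ω
  rwa [trace_eq_clmRank (hP.2.1 _), trace_eq_clmRank (hP.2.1 _), Nat.cast_inj] at this

lemma measurable_clmRank : Measurable fun ω => clmRank (P ω) := by
  have htrace : Measurable fun ω => LinearMap.trace ℝ E (P ω : E →ₗ[ℝ] E) := by
    simp_rw [LinearMap.trace_eq_sum_inner _ (EuclideanSpace.basisFun (Fin d) ℝ)]
    exact Finset.measurable_sum _ fun i _ => measurable_const.inner (hP.1 _)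
  refine measurable_to_countable' fun k => ?_
  convert htrace (measurableSet_singleton (k : ℝ)) using 1
  ext ω
  simp [trace_eq_clmRank (hP.2.1 ω)]

end InvProjector

variable (S) in
def EDBounds (P : Ω → EuclideanSpace ℝ (Fin d) →L[ℝ] EuclideanSpace ℝ (Fin d)) (α β K : ℝ) :
    Prop :=
  ∀ᵐ ω ∂ℙ, (∀ t : ℝ, 0 ≤ t → ‖S.Φ t ω * P ω‖ ≤ K * Real.exp (α * t)) ∧
    ∀ t : ℝ, t ≤ 0 → ‖S.Φ t ω * (1 - P ω)‖ ≤ K * Real.exp (β * t)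

lemma EDBounds.mono {α β K α' β' : ℝ} (h : S.EDBounds P α β K) (hα : α ≤ α') (hβ : β' ≤ β)
    (hK : 0 ≤ K) : S.EDBounds P α' β' K := by
  filter_upwards [h] with ω hω
  refine ⟨fun t ht => (hω.1 t ht).trans ?_, fun t ht => (hω.2 t ht).trans ?_⟩
  · gcongr
  · exact mul_le_mul_of_nonneg_left (Real.exp_le_exp.2 (mul_le_mul_of_nonpos_right hβ ht)) hK

lemma EDBounds.of_ae_eq {α β₁ α₂ β K₁ K₂ : ℝ} (h₁ : S.EDBounds P α β₁ K₁)
    (h₂ : S.EDBounds Q α₂ β K₂) (hPQ : P =ᵐ[ℙ] Q) : S.EDBounds P α β (max K₁ K₂) := by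
  filter_upwards [h₁, h₂, hPQ] with ω h₁ω h₂ω hω
  refine ⟨fun t ht => (h₁ω.1 t ht).trans ?_, fun t ht => hω ▸ (h₂ω.2 t ht).trans ?_⟩ <;>
    exact mul_le_mul_of_nonneg_right (by simp) (Real.exp_pos _).le

lemma isED_iff : S.IsED γ P ↔
    S.InvProjector P ∧ ∃ α < γ, ∃ β > γ, ∃ K ≥ 1, S.EDBounds P α β K := by
  refine ⟨fun ⟨hP, a, ha, K, hK, hb⟩ => ⟨hP, γ - a, by linarith, γ + a, by linarith, K, hK, hb⟩,
    fun ⟨hP, α, hα, β, hβ, K, hK, hb⟩ => ⟨hP, min (γ - α) (β - γ), lt_min (by linarith)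
      (by linarith), K, hK, hb.mono ?_ ?_ (by linarith)⟩⟩
  · linarith [min_le_left (γ - α) (β - γ)]
  · linarith [min_le_right (γ - α) (β - γ)]

namespace IsED

lemma eventually (h : S.IsED γ P) : ∀ᶠ γ' in 𝓝 γ, S.IsED γ' P := by
  obtain ⟨hP, α, hα, β, hβ, K, hK, hb⟩ := isED_iff.1 h
  filter_upwards [Ioo_mem_nhds hα hβ] with γ' hγ'
  exact isED_iff.2 ⟨hP, α, hγ'.1, β, hγ'.2, K, hK, hb⟩

lemma of_ae_eq (h₁ : S.IsED γ₁ P) (h₂ : S.IsED γ₂ Q) (hPQ : P =ᵐ[ℙ] Q) (hγ : γ ∈ Icc γ₁ γ₂) :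
    S.IsED γ P := by
  obtain ⟨hP, α, hα, _, _, K₁, hK₁, hb₁⟩ := isED_iff.1 h₁
  obtain ⟨-, _, _, β, hβ, K₂, -, hb₂⟩ := isED_iff.1 h₂
  exact isED_iff.2 ⟨hP, α, hα.trans_le hγ.1, β, hγ.2.trans_lt hβ, max K₁ K₂,
    hK₁.trans (le_max_left _ _), hb₁.of_ae_eq hb₂ hPQ⟩

lemma of_le_of_ae_eq_zero (h : S.IsED γ P) (h0 : ∀ᵐ ω ∂ℙ, P ω = 0) (hγ' : γ' ≤ γ) :
    S.IsED γ' P := by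
  obtain ⟨hP, _, _, β, hβ, K, hK, hb⟩ := isED_iff.1 h
  refine isED_iff.2 ⟨hP, γ' - 1, by linarith, β, hγ'.trans_lt hβ, K, hK, ?_⟩
  filter_upwards [hb, h0] with ω hω h0ω
  refine ⟨fun t _ => ?_, hω.2⟩
  rw [h0ω, mul_zero, norm_zero]
  positivity

lemma of_ge_of_ae_eq_one (h : S.IsED γ P) (h1 : ∀ᵐ ω ∂ℙ, P ω = 1) (hγ' : γ ≤ γ') :
    S.IsED γ' P := by
  obtain ⟨hP, α, hα, _, _, K, hK, hb⟩ := isED_iff.1 h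
  refine isED_iff.2 ⟨hP, α, hα.trans_le hγ', γ' + 1, by linarith, K, hK, ?_⟩
  filter_upwards [hb, h1] with ω hω h1ω
  refine ⟨hω.1, fun t _ => ?_⟩
  rw [h1ω, sub_self, mul_zero, norm_zero]
  positivity

lemma ae_mul_eq_of_le (h₁ : S.IsED γ₁ P) (h₂ : S.IsED γ₂ Q) (hγ : γ₁ ≤ γ₂) :
    ∀ᵐ ω ∂ℙ, Q ω * P ω = P ω ∧ P ω * Q ω = P ω := by
  obtain ⟨hP, α, hα, _, _, K₁, -, hb₁⟩ := isED_iff.1 h₁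
  obtain ⟨hQ, _, _, β, hβ, K₂, -, hb₂⟩ := isED_iff.1 h₂
  have hc : α - β < 0 := by linarith
  filter_upwards [hb₁, hb₂, S.ae_forall_int_θ hb₁, S.ae_forall_int_θ hb₂]
    with ω h₁ω h₂ω h₁θ h₂θ
  -- Both products factor through growth at most `e^{α n}` on the range of `P` and decay at
  -- least `e^{-β n}` backwards on the kernel of `Q`; as `α < β`, they vanish.
  have hrange : (1 - Q ω) * P ω = 0 := by
    refine eq_zero_of_norm_le_mul_exp (C := K₂ * K₁) hc fun n => ?_
    have h₂n := (h₂θ n).2 (-n) (by simp)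
    push_cast at h₂n
    calc ‖(1 - Q ω) * P ω‖
        = ‖S.Φ (-n) (S.θ n ω) * (1 - Q (S.θ n ω)) * (S.Φ n ω * P ω)‖ := by
          rw [← mul_assoc, hQ.Φ_conj_one_sub]
      _ ≤ K₂ * K₁ * Real.exp (β * -n + α * n) :=
          norm_mul_le_mul_exp h₂n (h₁ω.1 n n.cast_nonneg)
      _ = K₂ * K₁ * Real.exp ((α - β) * n) := by ring_nf
  have hker : P ω * (1 - Q ω) = 0 := by
    refine eq_zero_of_norm_le_mul_exp (C := K₁ * K₂) hc fun n => ?_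
    have h₁n := (h₁θ (-n)).1 n n.cast_nonneg
    push_cast at h₁n
    calc ‖P ω * (1 - Q ω)‖
        = ‖S.Φ n (S.θ (-n) ω) * P (S.θ (-n) ω) * (S.Φ (-n) ω * (1 - Q ω))‖ := by
          rw [← mul_assoc, ← hP.Φ_conj (-n) ω, neg_neg]
      _ ≤ K₁ * K₂ * Real.exp (α * n + β * -n) :=
          norm_mul_le_mul_exp h₁n (h₂ω.2 (-n) (by simp))
      _ = K₁ * K₂ * Real.exp ((α - β) * n) := by ring_nf
  rw [sub_mul, one_mul, sub_eq_zero] at hrange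
  rw [mul_sub, mul_one, sub_eq_zero] at hker
  exact ⟨hrange.symm, hker.symm⟩

lemma ae_clmRank_le (h₁ : S.IsED γ₁ P) (h₂ : S.IsED γ₂ Q) (hγ : γ₁ ≤ γ₂) :
    ∀ᵐ ω ∂ℙ, clmRank (P ω) ≤ clmRank (Q ω) :=
  (h₁.ae_mul_eq_of_le h₂ hγ).mono fun _ h => clmRank_le_of_mul_eq h.1

end IsED

-- `sInf ∅ = 0`: the value is meaningful only at rates that admit an exponential dichotomy.
variable (S) in
def edRank (γ : ℝ) : ℕ :=
  sInf {k | ∃ P, S.IsED γ P ∧ ∀ᵐ ω ∂ℙ, clmRank (P ω) = k}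

lemma coe_mem_spectrum_iff (g : ℝ) : (g : EReal) ∈ S.spectrum ↔ ¬ S.AdmitsED g := by
  simp [spectrum, AdmitsEDE]

section Ergodic

variable [IsProbabilityMeasure ℙ] (hErg : S.IsErgodic)
include hErg

lemma IsErgodic.exists_ae_eq_of_invariant {f : Ω → ℕ} (hf : Measurable f)
    (hinv : ∀ t ω, f (S.θ t ω) = f ω) : ∃ k, ∀ᵐ ω ∂ℙ, f ω = k := by
  have hlevel (k : ℕ) : ℙ (f ⁻¹' {k}) = 0 ∨ ℙ (f ⁻¹' {k}) = 1 :=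
    hErg _ (hf (measurableSet_singleton k)) fun t => by ext ω; simp [hinv]
  have hpos : ¬ ∀ k, ℙ (f ⁻¹' {k}) = 0 := fun h0 => by
    simpa [← preimage_iUnion, iUnion_of_singleton] using measure_iUnion_null h0
  push Not at hpos
  obtain ⟨k, hk⟩ := hpos
  exact ⟨k, (prob_compl_eq_zero_iff (hf (measurableSet_singleton k))).2
    ((hlevel k).resolve_left hk)⟩

lemma InvProjector.exists_ae_clmRank_eq (hP : S.InvProjector P) :
    ∃ k, ∀ᵐ ω ∂ℙ, clmRank (P ω) = k :=
  hErg.exists_ae_eq_of_invariant hP.measurable_clmRank hP.clmRank_θ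

lemma IsED.ae_clmRank_eq_edRank (h : S.IsED γ P) : ∀ᵐ ω ∂ℙ, clmRank (P ω) = S.edRank γ := by
  obtain ⟨k, hk⟩ := h.1.exists_ae_clmRank_eq hErg
  obtain ⟨Q, hQ, hQk⟩ := Nat.sInf_mem (s := {k | ∃ P, S.IsED γ P ∧ ∀ᵐ ω ∂ℙ, clmRank (P ω) = k})
    ⟨k, P, h, hk⟩
  have hkr : k = S.edRank γ := eventually_const.1 <| by
    filter_upwards [hk, hQk, h.ae_clmRank_le hQ le_rfl, hQ.ae_clmRank_le h le_rfl]
      with ω h₁ h₂ h₃ h₄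
    rw [edRank]
    omega
  exact hkr ▸ hk

lemma IsED.edRank_eq (h : S.IsED γ₁ P) (h' : S.IsED γ₂ P) : S.edRank γ₁ = S.edRank γ₂ :=
  eventually_const.1 <| by
    filter_upwards [h.ae_clmRank_eq_edRank hErg, h'.ae_clmRank_eq_edRank hErg] with ω h₁ h₂
    rw [← h₁, h₂]

lemma edRank_le (h : S.AdmitsED γ) : S.edRank γ ≤ d :=
  let ⟨_, hP⟩ := h
  eventually_const.1 <| (hP.ae_clmRank_eq_edRank hErg).mono fun _ hω => hω ▸ clmRank_le _

lemma edRank_mono (h₁ : S.AdmitsED γ₁) (h₂ : S.AdmitsED γ₂) (hγ : γ₁ ≤ γ₂) :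
    S.edRank γ₁ ≤ S.edRank γ₂ :=
  let ⟨_, hP⟩ := h₁
  let ⟨_, hQ⟩ := h₂
  eventually_const.1 <| by
    filter_upwards [hP.ae_clmRank_eq_edRank hErg, hQ.ae_clmRank_eq_edRank hErg,
      hP.ae_clmRank_le hQ hγ] with ω h₁ h₂ h₃
    rwa [← h₁, ← h₂]

lemma IsED.ae_eq_of_edRank_eq (h₁ : S.IsED γ₁ P) (h₂ : S.IsED γ₂ Q) (hγ : γ₁ ≤ γ₂)
    (hr : S.edRank γ₁ = S.edRank γ₂) : P =ᵐ[ℙ] Q := by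
  filter_upwards [h₁.ae_mul_eq_of_le h₂ hγ, h₁.ae_clmRank_eq_edRank hErg,
    h₂.ae_clmRank_eq_edRank hErg] with ω hω hPω hQω
  exact eq_of_mul_eq_of_clmRank_eq (h₁.1.2.1 ω) hω.1 hω.2 (by rw [hPω, hQω, hr])

lemma IsED.ae_eq_zero_iff (h : S.IsED γ P) : (∀ᵐ ω ∂ℙ, P ω = 0) ↔ S.edRank γ = 0 := by
  refine ⟨fun h0 => (eventually_const (f := ae ℙ)).1 ?_, fun hr => ?_⟩
  · filter_upwards [h.ae_clmRank_eq_edRank hErg, h0] with ω hω h0ω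
    rw [← hω, h0ω, clmRank_zero]
  · filter_upwards [h.ae_clmRank_eq_edRank hErg] with ω hω
    exact eq_zero_of_clmRank_eq_zero (hω.trans hr)

lemma IsED.ae_eq_one_iff (h : S.IsED γ P) : (∀ᵐ ω ∂ℙ, P ω = 1) ↔ S.edRank γ = d := by
  refine ⟨fun h1 => (eventually_const (f := ae ℙ)).1 ?_, fun hr => ?_⟩
  · filter_upwards [h.ae_clmRank_eq_edRank hErg, h1] with ω hω h1ω
    rw [← hω, h1ω, clmRank_one]
  · filter_upwards [h.ae_clmRank_eq_edRank hErg] with ω hω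
    exact eq_one_of_clmRank_eq (h.1.2.1 ω) (hω.trans hr)

lemma bot_mem_spectrum_iff : ⊥ ∈ S.spectrum ↔ ∀ γ, S.AdmitsED γ → S.edRank γ ≠ 0 := by
  simp only [spectrum, AdmitsEDE, mem_ofPred_eq, bot_ne_top, false_and, true_and, false_or,
    EReal.bot_ne_coe, exists_false, not_exists, not_and]
  exact forall_congr' fun γ => ⟨fun h ⟨P, hP⟩ hr => h P hP ((hP.ae_eq_zero_iff hErg).2 hr),
    fun h P hP h0 => h ⟨P, hP⟩ ((hP.ae_eq_zero_iff hErg).1 h0)⟩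

lemma top_mem_spectrum_iff : ⊤ ∈ S.spectrum ↔ ∀ γ, S.AdmitsED γ → S.edRank γ ≠ d := by
  simp only [spectrum, AdmitsEDE, mem_ofPred_eq, top_ne_bot, false_and, true_and, false_or,
    or_false, EReal.top_ne_coe, exists_false, not_exists, not_and]
  exact forall_congr' fun γ => ⟨fun h ⟨P, hP⟩ hr => h P hP ((hP.ae_eq_one_iff hErg).2 hr),
    fun h P hP h1 => h ⟨P, hP⟩ ((hP.ae_eq_one_iff hErg).1 h1)⟩

lemma isRankedResolvent : IsRankedResolvent {γ | S.AdmitsED γ} S.edRank d where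
  rank_le _ h := edRank_le hErg h
  rank_mono _ h₁ _ h₂ := edRank_mono hErg h₁ h₂
  Icc_subset := by
    rintro γ₁ ⟨P, hP⟩ γ₂ ⟨Q, hQ⟩ hr γ hγ
    exact ⟨P, hP.of_ae_eq hQ (hP.ae_eq_of_edRank_eq hErg hQ (hγ.1.trans hγ.2) hr) hγ⟩
  eventually_mem_rank_eq := by
    rintro γ ⟨P, hP⟩
    exact hP.eventually.mono fun γ' hγ' => ⟨⟨P, hγ'⟩, hγ'.edRank_eq hErg hP⟩
  mem_of_le_of_rank_eq_zero := by
    rintro γ ⟨P, hP⟩ hr γ' hγ'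
    exact ⟨P, hP.of_le_of_ae_eq_zero ((hP.ae_eq_zero_iff hErg).2 hr) hγ'⟩
  mem_of_ge_of_rank_eq := by
    rintro γ ⟨P, hP⟩ hr γ' hγ'
    exact ⟨P, hP.of_ge_of_ae_eq_one ((hP.ae_eq_one_iff hErg).2 hr) hγ'⟩

end Ergodic

end LinRDS

/-- **Spectral Theorem.** The dichotomy spectrum of an ergodic linear random
dynamical system on `ℝ^d` (with `d ≥ 1`) is a union of `n` closed intervals of the extended
real line, `Σ = [a 0, b 0] ∪ … ∪ [a (n-1), b (n-1)]`, with `1 ≤ n ≤ d` and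
`a 0 ≤ b 0 < a 1 ≤ b 1 < … < a (n-1) ≤ b (n-1)`. -/
theorem dichotomy_spectral_theorem
    {Ω : Type*} [MeasurableSpace Ω] {ℙ : Measure Ω} [IsProbabilityMeasure ℙ] {d : ℕ}
    (hd : 0 < d) (S : LinRDS ℙ d) (hErg : S.IsErgodic) :
    ∃ n : ℕ, 1 ≤ n ∧ n ≤ d ∧
      ∃ a b : Fin n → EReal,
        (∀ i, a i ≤ b i) ∧
        (∀ i j, i < j → b i < a j) ∧
        S.spectrum = ⋃ i, Set.Icc (a i) (b i) :=
  (S.isRankedResolvent hErg).exists_Icc_decomposition LinRDS.coe_mem_spectrum_iff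
    (LinRDS.bot_mem_spectrum_iff hErg) (LinRDS.top_mem_spectrum_iff hErg) hd

end
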